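/- arXiv:2601.03576 — 4 statements merged into one kernel-verified Lean document; each statement's English description precedes it below -/
import Mathlib

section
/- Let f^{11}, f^{12}, f^{21}, f^{22} : ℝ × ℝ → ℝ be C¹ functions of (t,x) and G¹, G² : ℝ × ℝ → ℝ continuous functions such that ∂_t f^{11} + ∂_x f^{12} = G¹ and ∂_t f^{21} − ∂_x f^{22} = G² hold everywhere. Assume there is R > 0 with f^{ij}(t,x) = 0 and G^i(t,x) = 0 whenever |x| ≥ R, that a := sup_{t∈ℝ} ∫_ℝ |f^{11}(t,x)| dx, b := sup_{t∈ℝ} ∫_ℝ |f^{21}(t,x)| dx, ‖G¹‖_{L¹(ℝ×ℝ)} and ‖G²‖_{L¹(ℝ×ℝ)} are finite, and that (t,x) ↦ f^{11}(t,x) f^{22}(t,x) + f^{12}(t,x) f^{21}(t,x) is integrable on ℝ × ℝ. Then ∫_ℝ ∫_ℝ ( f^{11} f^{22} + f^{12} f^{21} ) dx dt ≤ 2 ( a + ‖G¹‖_{L¹} ) ( b + ‖G²‖_{L¹} ). -/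
/-!
Let `W(t,x) = ∫_{-R}^x f21(t,y) dy`. Then `∂ₓW = f21` and, by the second conservation law,
`∂ₜW = f22 + ∫_{-R}^x G2`. Differentiating `Φ(t) = ∫ f11 W dx`, substituting
`∂ₜf11 = G1 - ∂ₓf12` and integrating by parts in `x` gives
`Φ' = ∫ (f11 f22 + f12 f21) dx + ∫ (G1 W + f11 ∫_{-R}^x G2) dx`.
As `|W| ≤ b`, we have `|Φ| ≤ a b`, and the last term is at most `b ‖G1(t)‖₁ + a ‖G2(t)‖₁`.
Integrating over `[-T, T]` and letting `T → ∞` bounds the double integral by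
`2 a b + b ‖G1‖₁ + a ‖G2‖₁`.
-/

open MeasureTheory Set Filter

namespace DivCurl

section Slices

variable {E : Type*} [NormedAddCommGroup E] [NormedSpace ℝ E] {f : ℝ × ℝ → E}

theorem hasDerivAt_fst_slice {t x : ℝ} (hf : DifferentiableAt ℝ f (t, x)) :
    HasDerivAt (fun s => f (s, x)) (fderiv ℝ f (t, x) (1, 0)) t :=
  hf.hasFDerivAt.comp_hasDerivAt t ((hasDerivAt_id t).prodMk (hasDerivAt_const t x))

theorem hasDerivAt_snd_slice {t x : ℝ} (hf : DifferentiableAt ℝ f (t, x)) :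
    HasDerivAt (fun y => f (t, y)) (fderiv ℝ f (t, x) (0, 1)) x :=
  hf.hasFDerivAt.comp_hasDerivAt x ((hasDerivAt_const x t).prodMk (hasDerivAt_id x))

theorem continuous_fderiv_apply_const (hf : ContDiff ℝ 1 f) (v : ℝ × ℝ) :
    Continuous fun p => fderiv ℝ f p v :=
  (hf.continuous_fderiv one_ne_zero).clm_apply continuous_const

end Slices

section CompactSupport

variable {E : Type*} [NormedAddCommGroup E] {h : ℝ → E} {R : ℝ}

theorem hasCompactSupport_of_forall_le_abs (h0 : ∀ x, R ≤ |x| → h x = 0) :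
    HasCompactSupport h :=
  HasCompactSupport.intro (isCompact_Icc (a := -R) (b := R)) fun x hx => by
    rw [mem_Icc, not_and_or, not_le, not_le] at hx
    exact h0 x (le_abs'.2 (hx.imp le_of_lt le_of_lt))

theorem integral_eq_intervalIntegral_of_forall_le_abs [NormedSpace ℝ E] (hR : 0 ≤ R)
    (h0 : ∀ x, R ≤ |x| → h x = 0) : ∫ x, h x = ∫ x in -R..R, h x := by
  rw [intervalIntegral.integral_of_le (by linarith),
    setIntegral_eq_integral_of_forall_compl_eq_zero fun x hx => h0 x ?_]
  rw [mem_Ioc, not_and_or, not_lt, not_le] at hx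
  exact le_abs'.2 (hx.imp id le_of_lt)

variable [NormedSpace ℝ E] {h' : ℝ → E}

theorem integrable_of_hasDerivAt_of_hasCompactSupport (hh : ∀ x, HasDerivAt h (h' x) x)
    (hh' : Continuous h') (hsupp : HasCompactSupport h) : Integrable h' := by
  have hderiv : deriv h = h' := funext fun x => (hh x).deriv
  exact hh'.integrable_of_hasCompactSupport (hderiv ▸ hsupp.deriv)

theorem integral_eq_zero_of_hasDerivAt_of_hasCompactSupport (hh : ∀ x, HasDerivAt h (h' x) x)
    (hh' : Continuous h') (hsupp : HasCompactSupport h) : ∫ x, h' x = 0 :=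
  integral_eq_zero_of_hasDerivAt_of_integrable hh
    (integrable_of_hasDerivAt_of_hasCompactSupport hh hh' hsupp)
    ((Differentiable.continuous fun x => (hh x).differentiableAt).integrable_of_hasCompactSupport
      hsupp)

end CompactSupport

def SpatiallySupported (R : ℝ) (f : ℝ × ℝ → ℝ) : Prop :=
  ∀ p : ℝ × ℝ, R ≤ |p.2| → f p = 0

namespace SpatiallySupported

variable {R : ℝ} {f g : ℝ × ℝ → ℝ}

theorem mul_right (hf : SpatiallySupported R f) (g : ℝ × ℝ → ℝ) :
    SpatiallySupported R fun p => f p * g p := fun p hp => by simp only [hf p hp, zero_mul]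

theorem add (hf : SpatiallySupported R f) (hg : SpatiallySupported R g) :
    SpatiallySupported R fun p => f p + g p := fun p hp => by
  simp only [hf p hp, hg p hp, add_zero]

theorem fderiv_fst (hf : SpatiallySupported R f) (hd : Differentiable ℝ f) :
    SpatiallySupported R fun p => fderiv ℝ f p (1, 0) := by
  rintro ⟨t, x⟩ hx
  have hzero : (fun s => f (s, x)) = fun _ => 0 := funext fun s => hf (s, x) hx
  exact (hasDerivAt_fst_slice (hd (t, x))).unique (hzero ▸ hasDerivAt_const t 0)

theorem hasCompactSupport_slice (hf : SpatiallySupported R f) (t : ℝ) :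
    HasCompactSupport fun x => f (t, x) :=
  hasCompactSupport_of_forall_le_abs fun x hx => hf (t, x) hx

theorem integrable_slice (hf : SpatiallySupported R f) (hc : Continuous f) (t : ℝ) :
    Integrable fun x => f (t, x) :=
  (hc.comp (Continuous.prodMk_right t)).integrable_of_hasCompactSupport
    (hf.hasCompactSupport_slice t)

theorem integral_slice_eq_intervalIntegral (hf : SpatiallySupported R f) (hR : 0 ≤ R) (t : ℝ) :
    ∫ x, f (t, x) = ∫ x in -R..R, f (t, x) :=
  integral_eq_intervalIntegral_of_forall_le_abs hR fun x hx => hf (t, x) hx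

end SpatiallySupported

section ParametricIntegrals

variable {E : Type*} [NormedAddCommGroup E] [NormedSpace ℝ E] {F F' : ℝ × ℝ → E}

theorem hasDerivAt_intervalIntegral_of_continuous (hF : Continuous F) (hF' : Continuous F')
    (hderiv : ∀ s x, HasDerivAt (fun s => F (s, x)) (F' (s, x)) s) (a b t : ℝ) :
    HasDerivAt (fun s => ∫ x in a..b, F (s, x)) (∫ x in a..b, F' (t, x)) t := by
  obtain ⟨C, hC⟩ :=
    ((isCompact_closedBall t 1).prod isCompact_uIcc).exists_bound_of_continuousOn hF'.continuousOn
  refine (intervalIntegral.hasDerivAt_integral_of_dominated_loc_of_deriv_le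
    (bound := fun _ => C) (Metric.closedBall_mem_nhds t one_pos)
    (Eventually.of_forall fun s => (hF.comp (Continuous.prodMk_right s)).aestronglyMeasurable)
    ((hF.comp (Continuous.prodMk_right t)).intervalIntegrable a b)
    (hF'.comp (Continuous.prodMk_right t)).aestronglyMeasurable
    (Eventually.of_forall fun x hx s hs => hC (s, x) ⟨hs, uIoc_subset_uIcc hx⟩)
    intervalIntegrable_const
    (Eventually.of_forall fun x _ s _ => hderiv s x)).2

theorem hasDerivAt_integral_of_spatiallySupported {R : ℝ} {F F' : ℝ × ℝ → ℝ} (hR : 0 ≤ R)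
    (hF : Continuous F) (hF' : Continuous F') (hFR : SpatiallySupported R F)
    (hF'R : SpatiallySupported R F')
    (hderiv : ∀ s x, HasDerivAt (fun s => F (s, x)) (F' (s, x)) s) (t : ℝ) :
    HasDerivAt (fun s => ∫ x, F (s, x)) (∫ x, F' (t, x)) t := by
  simp only [hFR.integral_slice_eq_intervalIntegral hR,
    hF'R.integral_slice_eq_intervalIntegral hR]
  exact hasDerivAt_intervalIntegral_of_continuous hF hF' hderiv (-R) R t

end ParametricIntegrals

noncomputable def spacePrimitive (k : ℝ × ℝ → ℝ) (a : ℝ) (p : ℝ × ℝ) : ℝ :=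
  ∫ y in a..p.2, k (p.1, y)

section SpacePrimitive

variable {k : ℝ × ℝ → ℝ} {a : ℝ}

theorem continuous_spacePrimitive (hk : Continuous k) : Continuous (spacePrimitive k a) :=
  intervalIntegral.continuous_parametric_primitive_of_continuous (f := fun s y => k (s, y)) hk

theorem hasDerivAt_spacePrimitive_snd (hk : Continuous k) (t x : ℝ) :
    HasDerivAt (fun y => spacePrimitive k a (t, y)) (k (t, x)) x :=
  intervalIntegral.integral_hasDerivAt_right
    ((hk.comp (Continuous.prodMk_right t)).intervalIntegrable _ _)
    ((hk.comp (Continuous.prodMk_right t)).stronglyMeasurableAtFilter _ _)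
    (hk.comp (Continuous.prodMk_right t)).continuousAt

theorem abs_spacePrimitive_le (hk : ∀ t, Integrable fun y => k (t, y)) (p : ℝ × ℝ) :
    |spacePrimitive k a p| ≤ ∫ y, |k (p.1, y)| :=
  intervalIntegral.norm_integral_le_integral_norm_uIoc.trans <|
    setIntegral_le_integral (hk p.1).norm (Eventually.of_forall fun _ => norm_nonneg _)

theorem hasDerivAt_spacePrimitive_fst (hk : ContDiff ℝ 1 k) (t x : ℝ) :
    HasDerivAt (fun s => spacePrimitive k a (s, x)) (∫ y in a..x, fderiv ℝ k (t, y) (1, 0)) t :=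
  hasDerivAt_intervalIntegral_of_continuous hk.continuous (continuous_fderiv_apply_const hk _)
    (fun s y => hasDerivAt_fst_slice ((hk.differentiable one_ne_zero) (s, y))) a x t

end SpacePrimitive

theorem hasDerivAt_spacePrimitive_of_conservationLaw {f g G : ℝ × ℝ → ℝ} {a : ℝ}
    (hf : ContDiff ℝ 1 f) (hg : ContDiff ℝ 1 g)
    (heq : ∀ p, fderiv ℝ f p (1, 0) - fderiv ℝ g p (0, 1) = G p) (ha : ∀ t, g (t, a) = 0)
    (t x : ℝ) :
    HasDerivAt (fun s => spacePrimitive f a (s, x)) (g (t, x) + spacePrimitive G a (t, x)) t := by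
  convert hasDerivAt_spacePrimitive_fst hf t x using 1
  have hDf : Continuous fun y => fderiv ℝ f (t, y) (1, 0) :=
    (continuous_fderiv_apply_const hf _).comp (Continuous.prodMk_right t)
  have hDg : Continuous fun y => fderiv ℝ g (t, y) (0, 1) :=
    (continuous_fderiv_apply_const hg _).comp (Continuous.prodMk_right t)
  have hgx : ∫ y in a..x, fderiv ℝ g (t, y) (0, 1) = g (t, x) := by
    rw [intervalIntegral.integral_eq_sub_of_hasDerivAt
      (fun y _ => hasDerivAt_snd_slice ((hg.differentiable one_ne_zero) (t, y)))
      (hDg.intervalIntegrable _ _), ha, sub_zero]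
  simp only [spacePrimitive, ← hgx, ← heq]
  rw [intervalIntegral.integral_sub (hDf.intervalIntegrable _ _) (hDg.intervalIntegrable _ _),
    add_sub_cancel]

theorem abs_integral_mul_le {α : Type*} [MeasurableSpace α] {μ : Measure α} {f g : α → ℝ} {C : ℝ}
    (hf : Integrable f μ) (hg : ∀ x, |g x| ≤ C) :
    |∫ x, f x * g x ∂μ| ≤ (∫ x, |f x| ∂μ) * C :=
  calc |∫ x, f x * g x ∂μ| ≤ ∫ x, |f x * g x| ∂μ := abs_integral_le_integral_abs
    _ ≤ ∫ x, |f x| * C ∂μ :=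
      integral_mono_of_nonneg (Eventually.of_forall fun _ => abs_nonneg _) (hf.abs.mul_const C)
        (Eventually.of_forall fun x => by
          simp only [abs_mul]; exact mul_le_mul_of_nonneg_left (hg x) (abs_nonneg _))
    _ = (∫ x, |f x| ∂μ) * C := integral_mul_const C _

theorem abs_integral_mul_spacePrimitive_le {f k : ℝ × ℝ → ℝ} {a t : ℝ}
    (hf : Integrable fun x => f (t, x)) (hk : ∀ s, Integrable fun y => k (s, y)) :
    |∫ x, f (t, x) * spacePrimitive k a (t, x)| ≤ (∫ x, |f (t, x)|) * ∫ y, |k (t, y)| :=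
  abs_integral_mul_le hf fun x => abs_spacePrimitive_le hk (t, x)

theorem hasDerivAt_integral_mul_spacePrimitive {f11 f21 f22 G2 : ℝ × ℝ → ℝ} {R a : ℝ}
    (hf11 : ContDiff ℝ 1 f11) (hf21 : ContDiff ℝ 1 f21) (hf22 : ContDiff ℝ 1 f22)
    (hG2 : Continuous G2) (heq2 : ∀ p, fderiv ℝ f21 p (1, 0) - fderiv ℝ f22 p (0, 1) = G2 p)
    (ha : ∀ t, f22 (t, a) = 0) (hR : 0 ≤ R) (h11 : SpatiallySupported R f11) (t : ℝ) :
    HasDerivAt (fun s => ∫ x, f11 (s, x) * spacePrimitive f21 a (s, x))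
      (∫ x, (fderiv ℝ f11 (t, x) (1, 0) * spacePrimitive f21 a (t, x) +
        f11 (t, x) * (f22 (t, x) + spacePrimitive G2 a (t, x)))) t := by
  set W := spacePrimitive f21 a
  set V := spacePrimitive G2 a
  have hW : Continuous W := continuous_spacePrimitive hf21.continuous
  have hd11 := hf11.differentiable one_ne_zero
  have hWt : ∀ s x, HasDerivAt (fun s => W (s, x)) (f22 (s, x) + V (s, x)) s :=
    hasDerivAt_spacePrimitive_of_conservationLaw hf21 hf22 heq2 ha
  exact hasDerivAt_integral_of_spatiallySupported (F := fun p => f11 p * W p)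
    (F' := fun p => fderiv ℝ f11 p (1, 0) * W p + f11 p * (f22 p + V p)) hR
    (hf11.continuous.mul hW)
    (((continuous_fderiv_apply_const hf11 _).mul hW).add
      (hf11.continuous.mul (hf22.continuous.add (continuous_spacePrimitive hG2))))
    (h11.mul_right W) (((h11.fderiv_fst hd11).mul_right W).add (h11.mul_right _))
    (fun s x => (hasDerivAt_fst_slice (hd11 (s, x))).mul (hWt s x)) t

theorem integral_fderiv_fst_mul_spacePrimitive_add {f11 f12 f21 f22 G1 G2 : ℝ × ℝ → ℝ}
    {R a : ℝ} (hf11 : ContDiff ℝ 1 f11) (hf12 : ContDiff ℝ 1 f12) (hf21 : ContDiff ℝ 1 f21)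
    (hf22 : ContDiff ℝ 1 f22) (hG1 : Continuous G1) (hG2 : Continuous G2)
    (heq1 : ∀ p, fderiv ℝ f11 p (1, 0) + fderiv ℝ f12 p (0, 1) = G1 p)
    (h11 : SpatiallySupported R f11) (h12 : SpatiallySupported R f12)
    (hG1R : SpatiallySupported R G1) (t : ℝ) :
    ∫ x, (fderiv ℝ f11 (t, x) (1, 0) * spacePrimitive f21 a (t, x) +
        f11 (t, x) * (f22 (t, x) + spacePrimitive G2 a (t, x))) =
      (∫ x, (f11 (t, x) * f22 (t, x) + f12 (t, x) * f21 (t, x))) +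
        ((∫ x, G1 (t, x) * spacePrimitive f21 a (t, x)) +
          ∫ x, f11 (t, x) * spacePrimitive G2 a (t, x)) := by
  set W := spacePrimitive f21 a
  set V := spacePrimitive G2 a
  have hW : Continuous W := continuous_spacePrimitive hf21.continuous
  have hV : Continuous V := continuous_spacePrimitive hG2
  have hIBP (x : ℝ) : HasDerivAt (fun y => f12 (t, y) * W (t, y))
      (fderiv ℝ f12 (t, x) (0, 1) * W (t, x) + f12 (t, x) * f21 (t, x)) x :=
    (hasDerivAt_snd_slice ((hf12.differentiable one_ne_zero) (t, x))).mul
      (hasDerivAt_spacePrimitive_snd hf21.continuous t x)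
  have hIBPc :
      Continuous fun x => fderiv ℝ f12 (t, x) (0, 1) * W (t, x) + f12 (t, x) * f21 (t, x) :=
    (((continuous_fderiv_apply_const hf12 _).mul hW).add
      (hf12.continuous.mul hf21.continuous)).comp (Continuous.prodMk_right t)
  have hIBPs := (h12.mul_right W).hasCompactSupport_slice t
  have hQ := ((h11.mul_right f22).add (h12.mul_right f21)).integrable_slice
    ((hf11.continuous.mul hf22.continuous).add (hf12.continuous.mul hf21.continuous)) t
  have hE1 := (hG1R.mul_right W).integrable_slice (hG1.mul hW) t
  have hE2 := (h11.mul_right V).integrable_slice (hf11.continuous.mul hV) t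
  have hsplit :
      (fun x => fderiv ℝ f11 (t, x) (1, 0) * W (t, x) + f11 (t, x) * (f22 (t, x) + V (t, x))) =
        fun x => ((f11 (t, x) * f22 (t, x) + f12 (t, x) * f21 (t, x)) +
          (G1 (t, x) * W (t, x) + f11 (t, x) * V (t, x))) -
        (fderiv ℝ f12 (t, x) (0, 1) * W (t, x) + f12 (t, x) * f21 (t, x)) :=
    funext fun x => by linear_combination W (t, x) * heq1 (t, x)
  rw [hsplit, integral_sub ?_ (integrable_of_hasDerivAt_of_hasCompactSupport hIBP hIBPc hIBPs),
    integral_add hQ ?_, integral_add hE1 hE2,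
    integral_eq_zero_of_hasDerivAt_of_hasCompactSupport hIBP hIBPc hIBPs, sub_zero]
  exacts [hE1.add hE2, hQ.add (hE1.add hE2)]

theorem integral_le_of_hasDerivAt_add {Φ ψ e m : ℝ → ℝ} {M : ℝ}
    (hΦ : ∀ t, HasDerivAt Φ (ψ t + e t) t) (hΦM : ∀ t, |Φ t| ≤ M)
    (hψ : Integrable ψ) (hm : Integrable m) (hem : ∀ t, |e t| ≤ m t) :
    ∫ t, ψ t ≤ 2 * M + ∫ t, m t := by
  -- `e = Φ' - ψ`, and derivatives are measurable.
  have he_meas : AEStronglyMeasurable e := by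
    have he_eq : e = fun t => deriv Φ t - ψ t := funext fun t => by rw [(hΦ t).deriv]; ring
    exact he_eq ▸ (measurable_deriv Φ).aestronglyMeasurable.sub hψ.aestronglyMeasurable
  have he : Integrable e := hm.mono' he_meas (Eventually.of_forall hem)
  have hFTC : ∫ t, (ψ t + e t) ≤ 2 * M := by
    refine le_of_tendsto (intervalIntegral_tendsto_integral (hψ.add he) tendsto_neg_atTop_atBot
      tendsto_id) (Eventually.of_forall fun T => ?_)
    dsimp only [id]
    rw [intervalIntegral.integral_eq_sub_of_hasDerivAt (fun t _ => hΦ t)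
      (hψ.add he).intervalIntegrable]
    linarith [(abs_le.1 (hΦM T)).2, (abs_le.1 (hΦM (-T))).1]
  have hneg : -∫ t, e t ≤ ∫ t, m t :=
    (neg_le_abs _).trans (abs_integral_le_integral_abs.trans (integral_mono he.abs hm hem))
  rw [integral_add hψ he] at hFTC
  linarith

theorem integral_integral_mul_add_mul_le {f11 f12 f21 f22 G1 G2 : ℝ × ℝ → ℝ} {R A B : ℝ}
    (hf11 : ContDiff ℝ 1 f11) (hf12 : ContDiff ℝ 1 f12) (hf21 : ContDiff ℝ 1 f21)
    (hf22 : ContDiff ℝ 1 f22) (hG1 : Continuous G1) (hG2 : Continuous G2)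
    (heq1 : ∀ p, fderiv ℝ f11 p (1, 0) + fderiv ℝ f12 p (0, 1) = G1 p)
    (heq2 : ∀ p, fderiv ℝ f21 p (1, 0) - fderiv ℝ f22 p (0, 1) = G2 p)
    (hR : 0 ≤ R) (h11 : SpatiallySupported R f11) (h12 : SpatiallySupported R f12)
    (h21 : SpatiallySupported R f21) (h22 : SpatiallySupported R f22)
    (hG1R : SpatiallySupported R G1) (hG2R : SpatiallySupported R G2)
    (hA : ∀ t, ∫ x, |f11 (t, x)| ≤ A) (hB : ∀ t, ∫ x, |f21 (t, x)| ≤ B)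
    (hG1int : Integrable G1) (hG2int : Integrable G2)
    (hint : Integrable fun p : ℝ × ℝ => f11 p * f22 p + f12 p * f21 p) :
    ∫ t, ∫ x, (f11 (t, x) * f22 (t, x) + f12 (t, x) * f21 (t, x)) ≤
      2 * (A * B) + ((∫ p, |G1 p|) * B + A * ∫ p, |G2 p|) := by
  have hA0 : 0 ≤ A := (integral_nonneg fun _ => abs_nonneg _).trans (hA 0)
  have i11 := h11.integrable_slice hf11.continuous
  have i21 := h21.integrable_slice hf21.continuous
  have hg1 := hG1int.abs.integral_prod_left
  have hg2 := hG2int.abs.integral_prod_left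
  have key := integral_le_of_hasDerivAt_add (M := A * B)
    (m := fun t => (∫ x, |G1 (t, x)|) * B + A * ∫ x, |G2 (t, x)|)
    (fun t => (hasDerivAt_integral_mul_spacePrimitive hf11 hf21 hf22 hG2 heq2
      (fun s => h22 (s, -R) (by rw [abs_neg, abs_of_nonneg hR])) hR h11 t).congr_deriv
      (integral_fderiv_fst_mul_spacePrimitive_add hf11 hf12 hf21 hf22 hG1 hG2 heq1 h11 h12
        hG1R t))
    (fun t => (abs_integral_mul_spacePrimitive_le (i11 t) i21).trans
      (mul_le_mul (hA t) (hB t) (integral_nonneg fun _ => abs_nonneg _) hA0))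
    hint.integral_prod_left ((hg1.mul_const B).add (hg2.const_mul A))
    (fun t => (abs_add_le _ _).trans (add_le_add
      ((abs_integral_mul_spacePrimitive_le (hG1R.integrable_slice hG1 t) i21).trans
        (mul_le_mul_of_nonneg_left (hB t) (integral_nonneg fun _ => abs_nonneg _)))
      ((abs_integral_mul_spacePrimitive_le (i11 t) (hG2R.integrable_slice hG2)).trans
        (mul_le_mul_of_nonneg_right (hA t) (integral_nonneg fun _ => abs_nonneg _)))))
  rwa [integral_add (hg1.mul_const B) (hg2.const_mul A), integral_mul_const, integral_const_mul,
    ← integral_prod _ hG1int.abs, ← integral_prod _ hG2int.abs, ← Measure.volume_eq_prod] at key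

end DivCurl

open DivCurl

/-- **Div-curl lemma** for a pair of one-dimensional conservation laws on `ℝ_t × ℝ_x`. -/
theorem div_curl_lemma
    (f11 f12 f21 f22 G1 G2 : ℝ × ℝ → ℝ)
    (hf11 : ContDiff ℝ 1 f11) (hf12 : ContDiff ℝ 1 f12)
    (hf21 : ContDiff ℝ 1 f21) (hf22 : ContDiff ℝ 1 f22)
    (hG1 : Continuous G1) (hG2 : Continuous G2)
    (heq1 : ∀ p : ℝ × ℝ, fderiv ℝ f11 p (1, 0) + fderiv ℝ f12 p (0, 1) = G1 p)
    (heq2 : ∀ p : ℝ × ℝ, fderiv ℝ f21 p (1, 0) - fderiv ℝ f22 p (0, 1) = G2 p)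
    (R : ℝ) (hR : 0 < R)
    (hsupp : ∀ p : ℝ × ℝ, R ≤ |p.2| →
      f11 p = 0 ∧ f12 p = 0 ∧ f21 p = 0 ∧ f22 p = 0 ∧ G1 p = 0 ∧ G2 p = 0)
    (hbdd1 : BddAbove (Set.range fun t : ℝ => ∫ x : ℝ, |f11 (t, x)|))
    (hbdd2 : BddAbove (Set.range fun t : ℝ => ∫ x : ℝ, |f21 (t, x)|))
    (hG1int : Integrable G1) (hG2int : Integrable G2)
    (hint : Integrable (fun p : ℝ × ℝ => f11 p * f22 p + f12 p * f21 p)) :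
    ∫ t : ℝ, ∫ x : ℝ, (f11 (t, x) * f22 (t, x) + f12 (t, x) * f21 (t, x)) ≤
      2 * ((⨆ t : ℝ, ∫ x : ℝ, |f11 (t, x)|) + ∫ p : ℝ × ℝ, |G1 p|) *
        ((⨆ t : ℝ, ∫ x : ℝ, |f21 (t, x)|) + ∫ p : ℝ × ℝ, |G2 p|) := by
  set A := ⨆ t : ℝ, ∫ x : ℝ, |f11 (t, x)|
  set B := ⨆ t : ℝ, ∫ x : ℝ, |f21 (t, x)|
  have hA (t : ℝ) : ∫ x, |f11 (t, x)| ≤ A := le_ciSup hbdd1 t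
  have hB (t : ℝ) : ∫ x, |f21 (t, x)| ≤ B := le_ciSup hbdd2 t
  have hA0 : 0 ≤ A := (integral_nonneg fun _ => abs_nonneg _).trans (hA 0)
  have hB0 : 0 ≤ B := (integral_nonneg fun _ => abs_nonneg _).trans (hB 0)
  have hN1 : 0 ≤ ∫ p : ℝ × ℝ, |G1 p| := integral_nonneg fun _ => abs_nonneg _
  have hN2 : 0 ≤ ∫ p : ℝ × ℝ, |G2 p| := integral_nonneg fun _ => abs_nonneg _
  have key := integral_integral_mul_add_mul_le hf11 hf12 hf21 hf22 hG1 hG2 heq1 heq2 hR.le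
    (fun p hp => (hsupp p hp).1) (fun p hp => (hsupp p hp).2.1) (fun p hp => (hsupp p hp).2.2.1)
    (fun p hp => (hsupp p hp).2.2.2.1) (fun p hp => (hsupp p hp).2.2.2.2.1)
    (fun p hp => (hsupp p hp).2.2.2.2.2) hA hB hG1int hG2int hint
  nlinarith [mul_nonneg hA0 hN2, mul_nonneg hN1 hB0, mul_nonneg hN1 hN2]
end

section
/- Let f^{11}, f^{12}, f^{21}, f^{22} : ℝ × ℝ → ℝ be C¹ functions of (t,x) and G¹, G² : ℝ × ℝ → ℝ continuous functions such that ∂_t f^{11} + ∂_x f^{12} = G¹ and ∂_t f^{21} − ∂_x f^{22} = G² hold everywhere, and assume there is R > 0 with f^{ij}(t,x) = 0 and G^i(t,x) = 0 whenever |x| ≥ R. Define F(t) := ∬_{{(x,y) : x < y}} f^{11}(t,x) f^{21}(t,y) dx dy. Then F is differentiable and for every t ∈ ℝ one has F'(t) + ∫_ℝ ( f^{11}(t,x) f^{22}(t,x) + f^{12}(t,x) f^{21}(t,x) ) dx = ∫_ℝ ( ∫_{−∞}^{x} f^{11}(t,z) dz ) G²(t,x) dx + ∫_ℝ ( ∫_{x}^{+∞}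 f^{21}(t,z) dz ) G¹(t,x) dx. -/
/-!
Differentiating under the integral sign gives
`F'(t) = ∬_{x<y} (∂ₜf¹¹(t,x) f²¹(t,y) + f¹¹(t,x) ∂ₜf²¹(t,y))`, and Fubini turns the two terms
into `∫ ∂ₜf¹¹ · H` and `∫ K · ∂ₜf²¹`, where `H(x) = ∫_x^∞ f²¹` and `K(y) = ∫_{-∞}^y f¹¹`.
Substituting `∂ₜf¹¹ = G¹ - ∂ₓf¹²` and `∂ₜf²¹ = G² + ∂ₓf²²` and integrating the `∂ₓ` terms by
parts against `H' = -f²¹` and `K' = f¹¹` produces the flux terms `-∫ f¹²f²¹` and `-∫ f¹¹f²²`.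
-/

open MeasureTheory Set Function

section PartialDerivatives

variable {E : Type*} [NormedAddCommGroup E] [NormedSpace ℝ E] {f : ℝ × ℝ → E} {t x : ℝ}

theorem DifferentiableAt.hasDerivAt_comp_mk_left (hf : DifferentiableAt ℝ f (t, x)) :
    HasDerivAt (fun s => f (s, x)) (fderiv ℝ f (t, x) (1, 0)) t :=
  hf.hasFDerivAt.comp_hasDerivAt t ((hasDerivAt_id t).prodMk (hasDerivAt_const t x))

theorem DifferentiableAt.hasDerivAt_comp_mk_right (hf : DifferentiableAt ℝ f (t, x)) :
    HasDerivAt (fun y => f (t, y)) (fderiv ℝ f (t, x) (0, 1)) x :=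
  hf.hasFDerivAt.comp_hasDerivAt x ((hasDerivAt_const x t).prodMk (hasDerivAt_id x))

end PartialDerivatives

theorem hasCompactSupport_of_forall_le_abs {E : Type*} [Zero E] {g : ℝ → E} {R : ℝ}
    (h : ∀ x, R ≤ |x| → g x = 0) : HasCompactSupport g :=
  HasCompactSupport.intro (isCompact_Icc (a := -R) (b := R)) fun x hx =>
    h x (not_le.1 (by rwa [abs_le, ← mem_Icc])).le

section HalfLineIntegrals

variable {E : Type*} [NormedAddCommGroup E] [NormedSpace ℝ E] [CompleteSpace E] {g : ℝ → E}
  {x : ℝ}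

theorem hasDerivAt_integral_Iio (hg : Integrable g) (hx : ContinuousAt g x) :
    HasDerivAt (fun u => ∫ z in Iio u, g z) (g x) x := by
  have hsplit : (fun u => ∫ z in Iio u, g z) =
      fun u => (∫ z in Iio 0, g z) + ∫ z in 0..u, g z := by
    funext u
    rw [← intervalIntegral.integral_Iio_sub_Iio' hg.integrableOn hg.integrableOn,
      add_sub_cancel]
  rw [hsplit]
  exact (intervalIntegral.integral_hasDerivAt_right hg.intervalIntegrable
    hg.aestronglyMeasurable.stronglyMeasurableAtFilter hx).const_add _

theorem hasDerivAt_integral_Ioi (hg : Integrable g) (hx : ContinuousAt g x) :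
    HasDerivAt (fun u => ∫ z in Ioi u, g z) (-g x) x := by
  have hsplit : (fun u => ∫ z in Ioi u, g z) =
      fun u => (∫ z in Ioi 0, g z) - ∫ z in 0..u, g z := by
    funext u
    rw [← intervalIntegral.integral_Ioi_sub_Ioi' hg.integrableOn hg.integrableOn,
      sub_sub_cancel]
  rw [hsplit]
  exact (intervalIntegral.integral_hasDerivAt_right hg.intervalIntegrable
    hg.aestronglyMeasurable.stronglyMeasurableAtFilter hx).const_sub _

end HalfLineIntegrals

theorem integral_deriv_mul_eq_neg_integral_mul_deriv {u w w' : ℝ → ℝ} (hu : ContDiff ℝ 1 u)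
    (huc : HasCompactSupport u) (hw : ∀ x, HasDerivAt w (w' x) x) (hw' : Continuous w') :
    ∫ x, deriv u x * w x = -∫ x, u x * w' x := by
  have hwc : Continuous w := continuous_iff_continuousAt.2 fun x => (hw x).continuousAt
  rw [integral_mul_deriv_eq_deriv_mul_of_integrable
    (fun x _ => (hu.differentiable one_ne_zero x).hasDerivAt) (fun x _ => hw x)
    ((hu.continuous.mul hw').integrable_of_hasCompactSupport huc.mul_right)
    (((hu.continuous_deriv le_rfl).mul hwc).integrable_of_hasCompactSupport huc.deriv.mul_right)
    ((hu.continuous.mul hwc).integrable_of_hasCompactSupport huc.mul_right), neg_neg]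

section HalfPlane

variable {φ ψ : ℝ → ℝ}

theorem measurableSet_lt_fst_snd : MeasurableSet {q : ℝ × ℝ | q.1 < q.2} :=
  measurableSet_lt measurable_fst measurable_snd

theorem integral_halfPlane_mul_eq_integral_mul_integral_Ioi (hφ : Integrable φ)
    (hψ : Integrable ψ) :
    ∫ q in {q : ℝ × ℝ | q.1 < q.2}, φ q.1 * ψ q.2 = ∫ x, φ x * ∫ z in Ioi x, ψ z := by
  rw [← integral_indicator measurableSet_lt_fst_snd, Measure.volume_eq_prod,
    integral_prod _ ((hφ.mul_prod hψ).indicator measurableSet_lt_fst_snd)]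
  congr 1 with x
  rw [← integral_const_mul, ← integral_indicator measurableSet_Ioi]
  congr 1 with y

theorem integral_halfPlane_mul_eq_integral_integral_Iio_mul (hφ : Integrable φ)
    (hψ : Integrable ψ) :
    ∫ q in {q : ℝ × ℝ | q.1 < q.2}, φ q.1 * ψ q.2 = ∫ y, (∫ z in Iio y, φ z) * ψ y := by
  rw [← integral_indicator measurableSet_lt_fst_snd, Measure.volume_eq_prod,
    integral_prod_symm _ ((hφ.mul_prod hψ).indicator measurableSet_lt_fst_snd)]
  congr 1 with y
  rw [← integral_mul_const, ← integral_indicator measurableSet_Iio]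
  congr 1 with x

end HalfPlane

theorem hasDerivAt_integral_of_eq_zero_of_notMem_compact {X E : Type*} [TopologicalSpace X]
    [T2Space X] [MeasurableSpace X] [OpensMeasurableSpace X] [NormedAddCommGroup E]
    [NormedSpace ℝ E] [CompleteSpace E] [SecondCountableTopologyEither X E]
    {μ : Measure X} [IsFiniteMeasureOnCompacts μ] {F F' : ℝ → X → E} {K : Set X}
    (hK : IsCompact K) (hF : ∀ τ, Continuous (F τ)) (hF' : Continuous (uncurry F'))
    (hderiv : ∀ τ x, HasDerivAt (F · x) (F' τ x) τ) (hFK : ∀ τ, ∀ x ∉ K, F τ x = 0)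
    (t : ℝ) :
    HasDerivAt (fun τ => ∫ x, F τ x ∂μ) (∫ x, F' t x ∂μ) t := by
  have hF'K : ∀ τ, ∀ x ∉ K, F' τ x = 0 := fun τ x hx =>
    (hderiv τ x).unique (by simpa only [hFK _ x hx] using hasDerivAt_const τ (0 : E))
  obtain ⟨C, hC⟩ := (isCompact_Icc (a := t - 1) (b := t + 1)).prod hK
    |>.exists_bound_of_continuousOn hF'.continuousOn
  have hbound : ∀ x, ∀ τ ∈ Icc (t - 1) (t + 1), ‖F' τ x‖ ≤ K.indicator (fun _ => C) x := by
    intro x τ hτ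
    by_cases hx : x ∈ K
    · simpa [hx] using hC (τ, x) ⟨hτ, hx⟩
    · simp [hx, hF'K τ x hx]
  exact (hasDerivAt_integral_of_dominated_loc_of_deriv_le
    (Icc_mem_nhds (by linarith) (by linarith))
    (Filter.Eventually.of_forall fun τ => (hF τ).aestronglyMeasurable)
    ((hF t).integrable_of_hasCompactSupport (HasCompactSupport.intro hK (hFK t)))
    (hF'.comp (Continuous.prodMk_right t)).aestronglyMeasurable
    (ae_of_all _ hbound)
    ((integrable_indicator_iff hK.measurableSet).2 (integrableOn_const hK.measure_lt_top.ne))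
    (ae_of_all _ fun x τ _ => hderiv τ x)).2

theorem hasDerivAt_integral_mul_comp_mk {f g : ℝ × ℝ → ℝ} {R : ℝ} (hf : ContDiff ℝ 1 f)
    (hg : ContDiff ℝ 1 g) (hfR : ∀ p : ℝ × ℝ, R ≤ |p.2| → f p = 0)
    (hgR : ∀ p : ℝ × ℝ, R ≤ |p.2| → g p = 0) (μ : Measure (ℝ × ℝ))
    [IsFiniteMeasureOnCompacts μ] (t : ℝ) :
    HasDerivAt (fun τ => ∫ q, f (τ, q.1) * g (τ, q.2) ∂μ)
      (∫ q, (fderiv ℝ f (t, q.1) (1, 0) * g (t, q.2) +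
        f (t, q.1) * fderiv ℝ g (t, q.2) (1, 0)) ∂μ) t := by
  refine hasDerivAt_integral_of_eq_zero_of_notMem_compact (μ := μ)
    (F := fun τ q => f (τ, q.1) * g (τ, q.2))
    (F' := fun τ q => fderiv ℝ f (τ, q.1) (1, 0) * g (τ, q.2) +
      f (τ, q.1) * fderiv ℝ g (τ, q.2) (1, 0))
    ((isCompact_Icc (a := -R) (b := R)).prod (isCompact_Icc (a := -R) (b := R)))
    (fun τ => by fun_prop) (by fun_prop) (fun τ q => ?_) (fun τ q hq => ?_) t
  · exact (hf.differentiable one_ne_zero _).hasDerivAt_comp_mk_left.mul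
      (hg.differentiable one_ne_zero _).hasDerivAt_comp_mk_left
  · simp only [mem_prod, mem_Icc, ← abs_le, not_and_or, not_le] at hq
    rcases hq with h | h
    · rw [hfR (τ, q.1) h.le, zero_mul]
    · rw [hgR (τ, q.2) h.le, mul_zero]

theorem integral_halfPlane_flux_identity {φ ψ a b u v g₁ g₂ : ℝ → ℝ}
    (hφ : Continuous φ) (hφi : Integrable φ) (hψ : Continuous ψ) (hψi : Integrable ψ)
    (hu : ContDiff ℝ 1 u) (huc : HasCompactSupport u)
    (hv : ContDiff ℝ 1 v) (hvc : HasCompactSupport v)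
    (hg₁ : Continuous g₁) (hg₁c : HasCompactSupport g₁)
    (hg₂ : Continuous g₂) (hg₂c : HasCompactSupport g₂)
    (ha : ∀ x, a x + deriv u x = g₁ x) (hb : ∀ x, b x - deriv v x = g₂ x) :
    ∫ q in {q : ℝ × ℝ | q.1 < q.2}, (a q.1 * ψ q.2 + φ q.1 * b q.2) =
      (∫ x, (∫ z in Iio x, φ z) * g₂ x) + (∫ x, (∫ z in Ioi x, ψ z) * g₁ x) -
        ∫ x, (φ x * v x + u x * ψ x) := by
  set H := fun x => ∫ z in Ioi x, ψ z
  set K := fun x => ∫ z in Iio x, φ z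
  have hH : ∀ x, HasDerivAt H (-ψ x) x := fun x => hasDerivAt_integral_Ioi hψi hψ.continuousAt
  have hK : ∀ x, HasDerivAt K (φ x) x := fun x => hasDerivAt_integral_Iio hφi hφ.continuousAt
  have hHc : Continuous H := continuous_iff_continuousAt.2 fun x => (hH x).continuousAt
  have hKc : Continuous K := continuous_iff_continuousAt.2 fun x => (hK x).continuousAt
  have hu' := hu.continuous_deriv le_rfl
  have hv' := hv.continuous_deriv le_rfl
  obtain rfl : a = g₁ - deriv u := funext fun x => eq_sub_of_add_eq (ha x)
  obtain rfl : b = g₂ + deriv v := funext fun x => eq_add_of_sub_eq (hb x)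
  have ha_int : Integrable (g₁ - deriv u) :=
    (hg₁.sub hu').integrable_of_hasCompactSupport (hg₁c.sub huc.deriv)
  have hb_int : Integrable (g₂ + deriv v) :=
    (hg₂.add hv').integrable_of_hasCompactSupport (hg₂c.add hvc.deriv)
  have hibp₁ : ∫ x, deriv u x * H x = ∫ x, u x * ψ x := by
    rw [integral_deriv_mul_eq_neg_integral_mul_deriv hu huc hH hψ.neg]
    simp only [mul_neg, integral_neg, neg_neg]
  have hibp₂ : ∫ x, K x * deriv v x = -∫ x, φ x * v x := by
    simp_rw [mul_comm (K _), mul_comm (φ _)]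
    exact integral_deriv_mul_eq_neg_integral_mul_deriv hv hvc hK hφ
  calc ∫ q in {q : ℝ × ℝ | q.1 < q.2},
        ((g₁ - deriv u) q.1 * ψ q.2 + φ q.1 * (g₂ + deriv v) q.2)
      = (∫ x, (g₁ - deriv u) x * H x) + ∫ y, K y * (g₂ + deriv v) y := by
        have h₁ : Integrable fun q : ℝ × ℝ => (g₁ - deriv u) q.1 * ψ q.2 := ha_int.mul_prod hψi
        have h₂ : Integrable fun q : ℝ × ℝ => φ q.1 * (g₂ + deriv v) q.2 := hφi.mul_prod hb_int
        rw [integral_add h₁.integrableOn h₂.integrableOn,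
          integral_halfPlane_mul_eq_integral_mul_integral_Ioi ha_int hψi,
          integral_halfPlane_mul_eq_integral_integral_Iio_mul hφi hb_int]
    _ = (∫ x, g₁ x * H x) - (∫ x, deriv u x * H x) +
          ((∫ y, K y * g₂ y) + ∫ y, K y * deriv v y) := by
        simp only [Pi.sub_apply, Pi.add_apply, sub_mul, mul_add]
        rw [integral_sub, integral_add]
        exacts [(hKc.mul hg₂).integrable_of_hasCompactSupport hg₂c.mul_left,
          (hKc.mul hv').integrable_of_hasCompactSupport hvc.deriv.mul_left,
          (hg₁.mul hHc).integrable_of_hasCompactSupport hg₁c.mul_right,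
          (hu'.mul hHc).integrable_of_hasCompactSupport huc.deriv.mul_right]
    _ = _ := by
        rw [hibp₁, hibp₂, integral_add]
        exacts [by simp_rw [mul_comm (g₁ _)]; ring,
          (hφ.mul hv.continuous).integrable_of_hasCompactSupport hvc.mul_left,
          (hu.continuous.mul hψ).integrable_of_hasCompactSupport huc.mul_right]

theorem div_curl_key_identity_general
    (f11 f12 f21 f22 G1 G2 : ℝ × ℝ → ℝ)
    (hf11 : ContDiff ℝ 1 f11) (hf12 : ContDiff ℝ 1 f12)
    (hf21 : ContDiff ℝ 1 f21) (hf22 : ContDiff ℝ 1 f22)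
    (hG1 : Continuous G1) (hG2 : Continuous G2)
    (heq1 : ∀ p : ℝ × ℝ, fderiv ℝ f11 p (1, 0) + fderiv ℝ f12 p (0, 1) = G1 p)
    (heq2 : ∀ p : ℝ × ℝ, fderiv ℝ f21 p (1, 0) - fderiv ℝ f22 p (0, 1) = G2 p)
    (R : ℝ)
    (hsupp : ∀ p : ℝ × ℝ, R ≤ |p.2| →
      f11 p = 0 ∧ f12 p = 0 ∧ f21 p = 0 ∧ f22 p = 0 ∧ G1 p = 0 ∧ G2 p = 0) :
    ∀ t : ℝ,
      HasDerivAt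
        (fun τ : ℝ =>
          ∫ q in {q : ℝ × ℝ | q.1 < q.2}, f11 (τ, q.1) * f21 (τ, q.2))
        ((∫ x : ℝ, (∫ z in Set.Iio x, f11 (t, z)) * G2 (t, x)) +
          (∫ x : ℝ, (∫ z in Set.Ioi x, f21 (t, z)) * G1 (t, x)) -
          ∫ x : ℝ, (f11 (t, x) * f22 (t, x) + f12 (t, x) * f21 (t, x))) t := by
  intro t
  have slice {g : ℝ × ℝ → ℝ} (hg : Continuous g) (hgR : ∀ p : ℝ × ℝ, R ≤ |p.2| → g p = 0) :
      Continuous (fun x => g (t, x)) ∧ HasCompactSupport (fun x => g (t, x)) :=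
    ⟨hg.comp (Continuous.prodMk_right t), hasCompactSupport_of_forall_le_abs fun x => hgR (t, x)⟩
  have slice_contDiff {f : ℝ × ℝ → ℝ} (hf : ContDiff ℝ 1 f) : ContDiff ℝ 1 (fun x => f (t, x)) :=
    hf.comp (contDiff_const.prodMk contDiff_id)
  have fderiv_eq_deriv {f : ℝ × ℝ → ℝ} (hf : ContDiff ℝ 1 f) (x : ℝ) :
      fderiv ℝ f (t, x) (0, 1) = deriv (fun y => f (t, y)) x :=
    (hf.differentiable one_ne_zero _).hasDerivAt_comp_mk_right.deriv.symm
  obtain ⟨h11, h11c⟩ := slice hf11.continuous fun p hp => (hsupp p hp).1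
  obtain ⟨-, h12c⟩ := slice hf12.continuous fun p hp => (hsupp p hp).2.1
  obtain ⟨h21, h21c⟩ := slice hf21.continuous fun p hp => (hsupp p hp).2.2.1
  obtain ⟨-, h22c⟩ := slice hf22.continuous fun p hp => (hsupp p hp).2.2.2.1
  obtain ⟨hg1, hg1c⟩ := slice hG1 fun p hp => (hsupp p hp).2.2.2.2.1
  obtain ⟨hg2, hg2c⟩ := slice hG2 fun p hp => (hsupp p hp).2.2.2.2.2
  convert hasDerivAt_integral_mul_comp_mk hf11 hf21 (fun p hp => (hsupp p hp).1)
    (fun p hp => (hsupp p hp).2.2.1) (volume.restrict {q : ℝ × ℝ | q.1 < q.2}) t using 1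
  exact (integral_halfPlane_flux_identity h11 (h11.integrable_of_hasCompactSupport h11c)
    h21 (h21.integrable_of_hasCompactSupport h21c) (slice_contDiff hf12) h12c
    (slice_contDiff hf22) h22c hg1 hg1c hg2 hg2c
    (fun x => by rw [← fderiv_eq_deriv hf12, heq1])
    (fun x => by rw [← fderiv_eq_deriv hf22, heq2])).symm

/-- The key differential identity behind the div-curl lemma: with
`F(t) = ∬_{x < y} f¹¹(t,x) f²¹(t,y) dx dy`, one has
`F'(t) + ∫ (f¹¹f²² + f¹²f²¹) dx
  = ∫ (∫_{-∞}^x f¹¹) G² dx + ∫ (∫_x^∞ f²¹) G¹ dx`. -/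
theorem div_curl_key_identity
    (f11 f12 f21 f22 G1 G2 : ℝ × ℝ → ℝ)
    (hf11 : ContDiff ℝ 1 f11) (hf12 : ContDiff ℝ 1 f12)
    (hf21 : ContDiff ℝ 1 f21) (hf22 : ContDiff ℝ 1 f22)
    (hG1 : Continuous G1) (hG2 : Continuous G2)
    (heq1 : ∀ p : ℝ × ℝ, fderiv ℝ f11 p (1, 0) + fderiv ℝ f12 p (0, 1) = G1 p)
    (heq2 : ∀ p : ℝ × ℝ, fderiv ℝ f21 p (1, 0) - fderiv ℝ f22 p (0, 1) = G2 p)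
    (R : ℝ) (hR : 0 < R)
    (hsupp : ∀ p : ℝ × ℝ, R ≤ |p.2| →
      f11 p = 0 ∧ f12 p = 0 ∧ f21 p = 0 ∧ f22 p = 0 ∧ G1 p = 0 ∧ G2 p = 0) :
    ∀ t : ℝ,
      HasDerivAt
        (fun τ : ℝ =>
          ∫ q in {q : ℝ × ℝ | q.1 < q.2}, f11 (τ, q.1) * f21 (τ, q.2))
        ((∫ x : ℝ, (∫ z in Set.Iio x, f11 (t, z)) * G2 (t, x)) +
          (∫ x : ℝ, (∫ z in Set.Ioi x, f21 (t, z)) * G1 (t, x)) -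
          ∫ x : ℝ, (f11 (t, x) * f22 (t, x) + f12 (t, x) * f21 (t, x))) t :=
  div_curl_key_identity_general f11 f12 f21 f22 G1 G2 hf11 hf12 hf21 hf22 hG1 hG2 heq1 heq2 R hsupp
end

section
/- Under the frame setup with S, v of class C², for all coordinate indices α, β one has the pointwise compatibility (covariant curl) relation ∂_α ψ_β + i A_α ψ_β = ∂_β ψ_α + i A_β ψ_α, i.e. D_α ψ_β = D_β ψ_α. -/
/-!
Write `ψ_β = ⟨v + i w, ∂_β S⟩`. Modulo `S`, which is orthogonal to `∂_β S`, the derivatives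
`∂_α v` and `∂_α w` are `A_α w` and `-A_α v`, so `⟨∂_α (v + i w), ∂_β S⟩ = -i A_α ψ_β`.
Hence `D_α ψ_β = ⟨v + i w, ∂_α ∂_β S⟩`, which is symmetric in `α, β` by Schwarz's theorem.
-/

open Matrix

/-- Partial derivative of `f` in the `α`-th coordinate direction. -/
noncomputable def pd {n : ℕ} {E : Type*} [NormedAddCommGroup E] [NormedSpace ℝ E]
    (f : (Fin n → ℝ) → E) (α : Fin n) (p : Fin n → ℝ) : E :=
  fderiv ℝ f p (Pi.single α 1)

/-- The complexified differentiated field `ψ_α = ⟨v, ∂_α S⟩ + i ⟨w, ∂_α S⟩`. -/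
noncomputable def framePsi {n : ℕ} (S v w : (Fin n → ℝ) → Fin 3 → ℝ) (α : Fin n)
    (p : Fin n → ℝ) : ℂ :=
  ((v p ⬝ᵥ pd S α p : ℝ) : ℂ) + Complex.I * ((w p ⬝ᵥ pd S α p : ℝ) : ℂ)

/-- The real connection coefficient `A_α = ⟨w, ∂_α v⟩`. -/
noncomputable def frameA {n : ℕ} (v w : (Fin n → ℝ) → Fin 3 → ℝ) (α : Fin n)
    (p : Fin n → ℝ) : ℝ :=
  w p ⬝ᵥ pd v α p

section PartialDerivative

variable {n : ℕ}

lemma pd_apply {ι : Type*} [Fintype ι] {f : (Fin n → ℝ) → ι → ℝ} {p : Fin n → ℝ}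
    (hf : DifferentiableAt ℝ f p) (α : Fin n) (i : ι) :
    pd (fun q => f q i) α p = pd f α p i := by
  rw [pd, fderiv_apply hf i]
  rfl

lemma pd_ofReal {f : (Fin n → ℝ) → ℝ} {p : Fin n → ℝ} (hf : DifferentiableAt ℝ f p) (α : Fin n) :
    pd (fun q => (f q : ℂ)) α p = pd f α p := by
  have h : HasFDerivAt (fun q => (f q : ℂ)) (Complex.ofRealCLM.comp (fderiv ℝ f p)) p :=
    Complex.ofRealCLM.hasFDerivAt.comp p hf.hasFDerivAt
  rw [pd, h.fderiv]
  rfl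

lemma pd_ofReal_add_I_mul {f g : (Fin n → ℝ) → ℝ} {p : Fin n → ℝ}
    (hf : DifferentiableAt ℝ f p) (hg : DifferentiableAt ℝ g p) (α : Fin n) :
    pd (fun q => (f q : ℂ) + Complex.I * g q) α p = pd f α p + Complex.I * pd g α p := by
  have hf' : DifferentiableAt ℝ (fun q => (f q : ℂ)) p :=
    Complex.ofRealCLM.differentiableAt.comp p hf
  have hg' : DifferentiableAt ℝ (fun q => (g q : ℂ)) p :=
    Complex.ofRealCLM.differentiableAt.comp p hg
  rw [← pd_ofReal hf, ← pd_ofReal hg, pd, pd, pd, fderiv_fun_add hf' (hg'.const_mul _),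
    fderiv_const_mul hg']
  rfl

lemma DifferentiableAt.dotProduct {ι : Type*} [Fintype ι] {f g : (Fin n → ℝ) → ι → ℝ}
    {p : Fin n → ℝ} (hf : DifferentiableAt ℝ f p) (hg : DifferentiableAt ℝ g p) :
    DifferentiableAt ℝ (fun q => f q ⬝ᵥ g q) p :=
  DifferentiableAt.fun_sum fun i _ => (differentiableAt_pi.1 hf i).mul (differentiableAt_pi.1 hg i)

lemma pd_dotProduct {ι : Type*} [Fintype ι] {f g : (Fin n → ℝ) → ι → ℝ} {p : Fin n → ℝ}
    (hf : DifferentiableAt ℝ f p) (hg : DifferentiableAt ℝ g p) (α : Fin n) :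
    pd (fun q => f q ⬝ᵥ g q) α p = pd f α p ⬝ᵥ g p + f p ⬝ᵥ pd g α p := by
  have hfi := differentiableAt_pi.1 hf
  have hgi := differentiableAt_pi.1 hg
  simp only [dotProduct, ← Finset.sum_add_distrib, ← pd_apply hf, ← pd_apply hg]
  rw [pd, fderiv_fun_sum (A := fun i q => f q i * g q i) fun i _ => (hfi i).mul (hgi i),
    _root_.sum_apply]
  refine Finset.sum_congr rfl fun i _ => ?_
  rw [fderiv_fun_mul (hfi i) (hgi i)]
  simp only [pd, _root_.add_apply, _root_.smul_apply, smul_eq_mul]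
  ring

lemma dotProduct_pd_add_pd_dotProduct_eq_zero {ι : Type*} [Fintype ι]
    {f g : (Fin n → ℝ) → ι → ℝ} {c : ℝ} (hfg : ∀ q, f q ⬝ᵥ g q = c) {p : Fin n → ℝ}
    (hf : DifferentiableAt ℝ f p) (hg : DifferentiableAt ℝ g p) (α : Fin n) :
    f p ⬝ᵥ pd g α p + pd f α p ⬝ᵥ g p = 0 := by
  rw [add_comm, ← pd_dotProduct hf hg, funext hfg, pd, fderiv_fun_const]
  rfl

lemma dotProduct_pd_self_eq_zero {ι : Type*} [Fintype ι] {f : (Fin n → ℝ) → ι → ℝ} {c : ℝ}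
    (hf1 : ∀ q, f q ⬝ᵥ f q = c) {p : Fin n → ℝ} (hf : DifferentiableAt ℝ f p) (α : Fin n) :
    f p ⬝ᵥ pd f α p = 0 := by
  have h := dotProduct_pd_add_pd_dotProduct_eq_zero hf1 hf hf α
  rw [dotProduct_comm (pd f α p)] at h
  linarith

variable {E : Type*} [NormedAddCommGroup E] [NormedSpace ℝ E] {f : (Fin n → ℝ) → E}

lemma ContDiff.differentiable_pd (hf : ContDiff ℝ 2 f) (α : Fin n) :
    Differentiable ℝ (pd f α) := fun p =>
  ((hf.fderiv_right le_rfl).differentiable one_ne_zero p).clm_apply (differentiableAt_const _)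

lemma ContDiff.pd_pd_comm (hf : ContDiff ℝ 2 f) (α β : Fin n) (p : Fin n → ℝ) :
    pd (pd f β) α p = pd (pd f α) β p := by
  have hf' : DifferentiableAt ℝ (fderiv ℝ f) p :=
    (hf.fderiv_right le_rfl).differentiable one_ne_zero p
  have hessian : ∀ γ δ : Fin n, pd (pd f γ) δ p
      = fderiv ℝ (fderiv ℝ f) p (Pi.single δ 1) (Pi.single γ 1) := fun γ δ => by
    unfold pd
    rw [fderiv_clm_apply hf' (differentiableAt_const _)]
    simp
  rw [hessian, hessian]
  exact (hf.contDiffAt.isSymmSndFDerivAt (by simp)) _ _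

end PartialDerivative

section Frame

/-- `(s ⨯₃ u) ⬝ᵥ x = det [s, u, x]`, and a product of two such determinants is the determinant
of the Gram matrix of `(s, u, x)` against `(s, u, y)`. -/
lemma dotProduct_eq_of_orthonormal (s u x y : Fin 3 → ℝ) (hs : s ⬝ᵥ s = 1) (hu : u ⬝ᵥ u = 1)
    (hsu : s ⬝ᵥ u = 0) :
    x ⬝ᵥ y = (s ⬝ᵥ x) * (s ⬝ᵥ y) + (u ⬝ᵥ x) * (u ⬝ᵥ y) + (s ⨯₃ u ⬝ᵥ x) * (s ⨯₃ u ⬝ᵥ y) := by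
  have gram : (s ⨯₃ u ⬝ᵥ x) * (s ⨯₃ u ⬝ᵥ y) = det (of ![s, u, x] * (of ![s, u, y])ᵀ) := by
    rw [det_mul, det_transpose, dotProduct_comm, triple_product_permutation, triple_product_eq_det,
      dotProduct_comm (s ⨯₃ u), triple_product_permutation, triple_product_eq_det]
    rfl
  have entry (a b : Fin 3 → Fin 3 → ℝ) (i j : Fin 3) : (of a * (of b)ᵀ) i j = a i ⬝ᵥ b j := rfl
  rw [gram, det_fin_three]
  simp only [entry, Fin.isValue, cons_val_zero, cons_val_one, cons_val_two, head_cons, tail_cons,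
    hs, hu, hsu, dotProduct_comm u s, dotProduct_comm x s, dotProduct_comm x u]
  ring

lemma cross_dotProduct_cross_self_of_orthonormal {s u : Fin 3 → ℝ} (hs : s ⬝ᵥ s = 1)
    (hu : u ⬝ᵥ u = 1) (hsu : s ⬝ᵥ u = 0) : s ⨯₃ u ⬝ᵥ s ⨯₃ u = 1 := by
  rw [cross_dot_cross, hs, hu, dotProduct_comm u s, hsu]
  ring

variable {n : ℕ}

lemma DifferentiableAt.crossProduct {f g : (Fin n → ℝ) → Fin 3 → ℝ} {p : Fin n → ℝ}
    (hf : DifferentiableAt ℝ f p) (hg : DifferentiableAt ℝ g p) :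
    DifferentiableAt ℝ (fun q => f q ⨯₃ g q) p := by
  have hfi := differentiableAt_pi.1 hf
  have hgi := differentiableAt_pi.1 hg
  refine differentiableAt_pi.2 fun i => ?_
  fin_cases i <;>
    simp only [cross_apply, Fin.isValue, cons_val_zero, cons_val_one, cons_val_two, head_cons,
      tail_cons, Fin.zero_eta, Fin.mk_one, Fin.reduceFinMk] <;>
    exact ((hfi _).mul (hgi _)).sub ((hfi _).mul (hgi _))

variable {S v w : (Fin n → ℝ) → Fin 3 → ℝ} {p : Fin n → ℝ}

lemma pd_framePsi (hv : DifferentiableAt ℝ v p) (hw : DifferentiableAt ℝ w p) {β : Fin n}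
    (hSβ : DifferentiableAt ℝ (pd S β) p) (α : Fin n) :
    pd (framePsi S v w β) α p =
      ((pd v α p ⬝ᵥ pd S β p + v p ⬝ᵥ pd (pd S β) α p : ℝ) : ℂ)
        + Complex.I * ((pd w α p ⬝ᵥ pd S β p + w p ⬝ᵥ pd (pd S β) α p : ℝ) : ℂ) := by
  unfold framePsi
  rw [pd_ofReal_add_I_mul (hv.dotProduct hSβ) (hw.dotProduct hSβ), pd_dotProduct hv hSβ,
    pd_dotProduct hw hSβ]

/-- Derivatives of `S` are tangent to the sphere, hence expand in the frame `(v, w)`. -/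
lemma dotProduct_pd_eq_of_frame (hS1 : ∀ q, S q ⬝ᵥ S q = 1) (hv1 : v p ⬝ᵥ v p = 1)
    (hSv : S p ⬝ᵥ v p = 0) (hw : w p = S p ⨯₃ v p) (hSd : DifferentiableAt ℝ S p)
    (x : Fin 3 → ℝ) (β : Fin n) :
    x ⬝ᵥ pd S β p = (v p ⬝ᵥ x) * (v p ⬝ᵥ pd S β p) + (w p ⬝ᵥ x) * (w p ⬝ᵥ pd S β p) := by
  rw [dotProduct_eq_of_orthonormal (S p) (v p) x _ (hS1 p) hv1 hSv,
    dotProduct_pd_self_eq_zero hS1 hSd, hw]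
  ring

lemma covariant_pd_framePsi (hS1 : ∀ q, S q ⬝ᵥ S q = 1) (hv1 : ∀ q, v q ⬝ᵥ v q = 1)
    (hSv : ∀ q, S q ⬝ᵥ v q = 0) (hw : ∀ q, w q = S q ⨯₃ v q) (hSd : DifferentiableAt ℝ S p)
    (hvd : DifferentiableAt ℝ v p) (hwd : DifferentiableAt ℝ w p) {β : Fin n}
    (hSβ : DifferentiableAt ℝ (pd S β) p) (α : Fin n) :
    pd (framePsi S v w β) α p + Complex.I * (frameA v w α p : ℂ) * framePsi S v w β p =
      ((v p ⬝ᵥ pd (pd S β) α p : ℝ) : ℂ) + Complex.I * ((w p ⬝ᵥ pd (pd S β) α p : ℝ) : ℂ) := by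
  have hw1 (q : Fin n → ℝ) : w q ⬝ᵥ w q = 1 := by
    rw [hw]; exact cross_dotProduct_cross_self_of_orthonormal (hS1 q) (hv1 q) (hSv q)
  have hvw (q : Fin n → ℝ) : v q ⬝ᵥ w q = 0 := by rw [hw]; exact dot_cross_self _ _
  have hv_pd_w : v p ⬝ᵥ pd w α p = -frameA v w α p := by
    have h := dotProduct_pd_add_pd_dotProduct_eq_zero hvw hvd hwd α
    rw [dotProduct_comm (pd v α p)] at h
    rw [frameA]
    linarith
  have hv' : pd v α p ⬝ᵥ pd S β p = frameA v w α p * (w p ⬝ᵥ pd S β p) := by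
    rw [dotProduct_pd_eq_of_frame hS1 (hv1 p) (hSv p) (hw p) hSd,
      dotProduct_pd_self_eq_zero hv1 hvd, frameA]
    ring
  have hw' : pd w α p ⬝ᵥ pd S β p = -(frameA v w α p * (v p ⬝ᵥ pd S β p)) := by
    rw [dotProduct_pd_eq_of_frame hS1 (hv1 p) (hSv p) (hw p) hSd,
      dotProduct_pd_self_eq_zero hw1 hwd, hv_pd_w]
    ring
  rw [pd_framePsi hvd hwd hSβ, hv', hw', framePsi]
  push_cast
  linear_combination (frameA v w α p * (w p ⬝ᵥ pd S β p) : ℂ) * Complex.I_sq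

end Frame

/-- Compatibility (covariant curl) relation `D_α ψ_β = D_β ψ_α`, i.e.
`∂_α ψ_β + i A_α ψ_β = ∂_β ψ_α + i A_β ψ_α`. -/
theorem frame_covariant_curl {n : ℕ}
    (S v : (Fin n → ℝ) → Fin 3 → ℝ)
    (hS : ContDiff ℝ 2 S) (hv : ContDiff ℝ 2 v)
    (hS1 : ∀ p, S p ⬝ᵥ S p = 1) (hv1 : ∀ p, v p ⬝ᵥ v p = 1)
    (hSv : ∀ p, S p ⬝ᵥ v p = 0)
    (w : (Fin n → ℝ) → Fin 3 → ℝ) (hw : ∀ p, w p = crossProduct (S p) (v p)) :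
    ∀ (α β : Fin n) (p : Fin n → ℝ),
      pd (framePsi S v w β) α p + Complex.I * (frameA v w α p : ℂ) * framePsi S v w β p =
        pd (framePsi S v w α) β p + Complex.I * (frameA v w β p : ℂ) * framePsi S v w α p := by
  intro α β p
  have hSd := hS.differentiable two_ne_zero p
  have hvd := hv.differentiable two_ne_zero p
  have hwd : DifferentiableAt ℝ w p := funext hw ▸ hSd.crossProduct hvd
  rw [covariant_pd_framePsi hS1 hv1 hSv hw hSd hvd hwd (hS.differentiable_pd β p),
    covariant_pd_framePsi hS1 hv1 hSv hw hSd hvd hwd (hS.differentiable_pd α p),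
    hS.pd_pd_comm]
end

section
/- Let δ̃ ∈ (0, 1/2). There exists a constant C > 0 depending only on δ̃ such that for every sequence β : ℤ → (0,∞) satisfying the slow variation condition β_k ≤ 2^{δ̃|k−k'|} β_{k'} for all k, k' ∈ ℤ, and for all k, j ∈ ℤ, one has Σ_{k' ≤ k} 2^{k'} (1 + 2^{2(k'+j)})^{−1} β_{k'} ≤ C · ( min(2^k, 2^{−j}) )^{1−δ̃} · 2^{−δ̃ j} · β_{−j}. -/
/-!
Put `n = k' + j`. The heat weight satisfies `2^k' (1 + 2^(2n))⁻¹ ≤ 2^(-j) 2^(-|n|)` and slow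
variation gives `β k' ≤ 2^(δ̃|n|) β (-j)`, so each term is at most `2^(-j) β (-j) q^|n|` with
`q = 2^(-(1-δ̃)) < 1`. The two-sided geometric sum `∑_{n ≤ k+j} q^|n|` is at most
`(1+q)/(1-q) · q^((k+j)⁻)`, and `2^(-j) q^((k+j)⁻) = min(2^k, 2^(-j))^(1-δ̃) 2^(-δ̃ j)`.
-/

lemma zpow_mul_inv_one_add_zpow_two_mul_le {b : ℝ} (hb : 1 ≤ b) (m : ℤ) :
    b ^ m * (1 + b ^ (2 * m))⁻¹ ≤ b ^ (-|m|) := by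
  have hb₀ : 0 < b := by linarith
  have hpow : 0 < b ^ (2 * m) := zpow_pos hb₀ _
  rcases le_total m 0 with hm | hm
  · rw [abs_of_nonpos hm, neg_neg]
    calc b ^ m * (1 + b ^ (2 * m))⁻¹ ≤ b ^ m * 1 := by
          gcongr; exact inv_le_one_of_one_le₀ (by linarith)
      _ = b ^ m := mul_one _
  · rw [abs_of_nonneg hm]
    calc b ^ m * (1 + b ^ (2 * m))⁻¹ ≤ b ^ m * (b ^ (2 * m))⁻¹ := by gcongr; linarith
      _ = b ^ (-m) := by rw [← zpow_neg, ← zpow_add₀ hb₀.ne']; ring_nf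

lemma two_zpow_neg_abs_mul_rpow (δ : ℝ) (n : ℤ) :
    (2 : ℝ) ^ (-|n|) * 2 ^ (δ * |(n : ℝ)|) = ((2 : ℝ) ^ (-(1 - δ))) ^ n.natAbs := by
  rw [← Real.rpow_natCast, ← Real.rpow_mul zero_le_two, ← Real.rpow_intCast,
    ← Real.rpow_add two_pos, Nat.cast_natAbs]
  push_cast
  ring_nf

lemma heat_term_le {δ : ℝ} {β : ℤ → ℝ} (hβ₀ : ∀ k, 0 ≤ β k)
    (hβ : ∀ k k' : ℤ, β k ≤ (2 : ℝ) ^ (δ * |(k : ℝ) - (k' : ℝ)|) * β k') (m j : ℤ) :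
    (2 : ℝ) ^ m * (1 + (2 : ℝ) ^ (2 * (m + j)))⁻¹ * β m ≤
      (2 : ℝ) ^ (-j) * β (-j) * ((2 : ℝ) ^ (-(1 - δ))) ^ (m + j).natAbs := by
  have hsplit : (2 : ℝ) ^ m = 2 ^ (-j) * 2 ^ (m + j) := by
    rw [← zpow_add₀ two_ne_zero]; ring_nf
  have hslow : β m ≤ (2 : ℝ) ^ (δ * |((m + j : ℤ) : ℝ)|) * β (-j) := by
    simpa [sub_neg_eq_add] using hβ m (-j)
  calc (2 : ℝ) ^ m * (1 + (2 : ℝ) ^ (2 * (m + j)))⁻¹ * β m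
      = 2 ^ (-j) * (2 ^ (m + j) * (1 + (2 : ℝ) ^ (2 * (m + j)))⁻¹) * β m := by
        rw [hsplit, mul_assoc (2 ^ (-j) : ℝ)]
    _ ≤ 2 ^ (-j) * 2 ^ (-|m + j|) * ((2 : ℝ) ^ (δ * |((m + j : ℤ) : ℝ)|) * β (-j)) := by
        gcongr
        · exact hβ₀ m
        · exact zpow_mul_inv_one_add_zpow_two_mul_le one_le_two _
    _ = (2 : ℝ) ^ (-j) * β (-j) * ((2 : ℝ) ^ (-(1 - δ))) ^ (m + j).natAbs := by
        rw [← two_zpow_neg_abs_mul_rpow]; ring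

section Geometric

variable {q : ℝ}

lemma hasSum_pow_natAbs (hq₀ : 0 ≤ q) (hq₁ : q < 1) :
    HasSum (fun m : ℤ => q ^ m.natAbs) ((1 + q) / (1 - q)) := by
  have hpos : HasSum (fun n : ℕ => q ^ (n : ℤ).natAbs) (1 - q)⁻¹ := by
    simpa only [Int.natAbs_natCast] using hasSum_geometric_of_lt_one hq₀ hq₁
  have hneg : HasSum (fun n : ℕ => q ^ (-((n : ℤ) + 1)).natAbs) (q * (1 - q)⁻¹) := by
    have h (n : ℕ) : (-((n : ℤ) + 1)).natAbs = n + 1 := by omega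
    simpa only [h, pow_succ'] using (hasSum_geometric_of_lt_one hq₀ hq₁).mul_left q
  convert HasSum.of_nat_of_neg_add_one (f := fun m : ℤ => q ^ m.natAbs) hpos hneg using 1
  field_simp [(sub_pos.2 hq₁).ne']

lemma hasSum_pow_natAbs_add (hq₀ : 0 ≤ q) (hq₁ : q < 1) (c : ℤ) :
    HasSum (fun m : ℤ => q ^ (m + c).natAbs) ((1 + q) / (1 - q)) :=
  (Equiv.addRight c).hasSum_iff (f := fun m : ℤ => q ^ m.natAbs) |>.2
    (hasSum_pow_natAbs hq₀ hq₁)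

lemma tsum_pow_natAbs_add_le (hq₀ : 0 ≤ q) (hq₁ : q < 1) (k j : ℤ) :
    ∑' m : {m : ℤ // m ≤ k}, q ^ ((m : ℤ) + j).natAbs ≤
      (1 + q) / (1 - q) * q ^ (-(k + j)).toNat := by
  -- on `m ≤ k` the exponent splits off `(k + j)⁻`, leaving a translate of the full two-sided sum
  have hsplit (m : {m : ℤ // m ≤ k}) : q ^ ((m : ℤ) + j).natAbs =
      q ^ (-(k + j)).toNat * q ^ ((m : ℤ) + (j - min (k + j) 0)).natAbs := by
    rw [← pow_add]
    have := m.2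
    congr 1
    omega
  have hS := hasSum_pow_natAbs_add hq₀ hq₁ (j - min (k + j) 0)
  rw [tsum_congr hsplit, tsum_mul_left, mul_comm]
  gcongr
  exact hS.tsum_eq ▸ hS.summable.tsum_subtype_le _ _ (fun _ => by positivity)

end Geometric

lemma two_zpow_neg_mul_rpow_pow_toNat (δ : ℝ) (k j : ℤ) :
    (2 : ℝ) ^ (-j) * ((2 : ℝ) ^ (-(1 - δ))) ^ (-(k + j)).toNat =
      (min ((2 : ℝ) ^ k) ((2 : ℝ) ^ (-j))) ^ (1 - δ) * (2 : ℝ) ^ (-(δ * (j : ℝ))) := by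
  rcases le_total (k + j) 0 with hkj | hkj
  · have hn : (((-(k + j)).toNat : ℕ) : ℝ) = -((k : ℝ) + j) := by
      rw [← Int.cast_natCast, Int.toNat_of_nonneg (by omega)]; push_cast; ring
    rw [min_eq_left (zpow_le_zpow_right₀ one_le_two (by omega)), ← Real.rpow_natCast,
      ← Real.rpow_mul zero_le_two, ← Real.rpow_intCast, ← Real.rpow_intCast 2 k,
      ← Real.rpow_mul zero_le_two, ← Real.rpow_add two_pos, ← Real.rpow_add two_pos, hn]
    push_cast
    ring_nf
  · rw [min_eq_right (zpow_le_zpow_right₀ one_le_two (by omega)), Int.toNat_of_nonpos (by omega),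
      pow_zero, mul_one, ← Real.rpow_intCast, ← Real.rpow_mul zero_le_two, ← Real.rpow_add two_pos]
    push_cast
    ring_nf

theorem low_frequency_sum_estimate_general (δt : ℝ) (hδt₁ : δt < 1 / 2) :
    ∃ C : ℝ, 0 < C ∧
      ∀ β : ℤ → ℝ, (∀ k, 0 < β k) →
        (∀ k k' : ℤ, β k ≤ (2 : ℝ) ^ (δt * |(k : ℝ) - (k' : ℝ)|) * β k') →
        ∀ k j : ℤ,
          (∑' k' : {m : ℤ // m ≤ k},
              (2 : ℝ) ^ (k' : ℤ) * (1 + (2 : ℝ) ^ (2 * ((k' : ℤ) + j)))⁻¹ * β k') ≤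
            C * (min ((2 : ℝ) ^ k) ((2 : ℝ) ^ (-j))) ^ (1 - δt) *
              (2 : ℝ) ^ (-(δt * (j : ℝ))) * β (-j) := by
  set q : ℝ := (2 : ℝ) ^ (-(1 - δt))
  have hq₀ : 0 ≤ q := by positivity
  have hq₁ : q < 1 := Real.rpow_lt_one_of_one_lt_of_neg one_lt_two (by linarith)
  refine ⟨(1 + q) / (1 - q), div_pos (by linarith) (by linarith), fun β hβ hslow k j => ?_⟩
  have hterm (m : {m : ℤ // m ≤ k}) := heat_term_le (fun k => (hβ k).le) hslow m j
  have hbound : Summable fun m : {m : ℤ // m ≤ k} =>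
      (2 : ℝ) ^ (-j) * β (-j) * q ^ ((m : ℤ) + j).natAbs :=
    ((hasSum_pow_natAbs_add hq₀ hq₁ j).summable.subtype _).mul_left _
  calc _ ≤ ∑' m : {m : ℤ // m ≤ k}, (2 : ℝ) ^ (-j) * β (-j) * q ^ ((m : ℤ) + j).natAbs :=
        (hbound.of_nonneg_of_le (fun m => by have := hβ m; positivity) hterm).tsum_le_tsum
          hterm hbound
    _ ≤ (2 : ℝ) ^ (-j) * β (-j) * ((1 + q) / (1 - q) * q ^ (-(k + j)).toNat) := by
        rw [tsum_mul_left]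
        exact mul_le_mul_of_nonneg_left (tsum_pow_natAbs_add_le hq₀ hq₁ k j)
          (by have := hβ (-j); positivity)
    _ = _ := by
        rw [mul_assoc ((1 + q) / (1 - q)), ← two_zpow_neg_mul_rpow_pow_toNat]
        ring

/-- Low-frequency weighted summation estimate: for `δ̃ ∈ (0,1/2)` there is a constant
`C = C(δ̃)` such that for every positive sequence `β` that is slowly varying with
parameter `δ̃` and all `k, j ∈ ℤ`,
`Σ_{k' ≤ k} 2^{k'} (1 + 2^{2(k'+j)})⁻¹ β_{k'}
  ≤ C (min(2^k, 2^{−j}))^{1−δ̃} 2^{−δ̃ j} β_{−j}`. -/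
theorem low_frequency_sum_estimate (δt : ℝ) (hδt₀ : 0 < δt) (hδt₁ : δt < 1 / 2) :
    ∃ C : ℝ, 0 < C ∧
      ∀ β : ℤ → ℝ, (∀ k, 0 < β k) →
        (∀ k k' : ℤ, β k ≤ (2 : ℝ) ^ (δt * |(k : ℝ) - (k' : ℝ)|) * β k') →
        ∀ k j : ℤ,
          (∑' k' : {m : ℤ // m ≤ k},
              (2 : ℝ) ^ (k' : ℤ) * (1 + (2 : ℝ) ^ (2 * ((k' : ℤ) + j)))⁻¹ * β k') ≤
            C * (min ((2 : ℝ) ^ k) ((2 : ℝ) ^ (-j))) ^ (1 - δt) *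
              (2 : ℝ) ^ (-(δt * (j : ℝ))) * β (-j) :=
  low_frequency_sum_estimate_general δt hδt₁
end
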